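/- Fix m, n ∈ ℕ, an index set Ω ⊆ Fin m × Fin n, real m × n matrices S and g with g i j = 0 for all (i, j) ∉ Ω, and parameters t > 0, γ > 0. Equip m × n real matrices with the Frobenius inner product. If d is a minimizer over all m × n real matrices of T ↦ ⟨g, T⟩_F + (1/(2t))‖T‖_F² + γ·∑_{(i,j)∈Ω} |S i j + T i j|, then d i j = 0 for every (i, j) ∉ Ω, and for every (i, j) ∈ Ω the entry (S + d) i j equals the soft-thresholding of (S i j − t·g i j) at level γt, i.e. sign(S i j − t·g i j)·max(|S i j − t·g i j| − γt, 0). (This is the closed-form solution (21) of the ΔS subproblem: the off-support entries of ΔS^k can be set to 0 and the on-support entries are given by ℓ1 shrinkage.) -/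

import Mathlib

/-!
The objective is a sum of entrywise objectives `x ↦ g x + x² / (2t) + [(i, j) ∈ Ω] γ |S + x|`,
so a minimizer minimizes each of them (vary one entry at a time). Off `Ω` this is `x² / (2t)`,
minimized only at `0`. On `Ω`, the substitution `y = S + x` and completing the square turn it into
`((y - w)² + 2γt |y|) / (2t)` plus a constant, with `w = S - t g`. Its minimizer is unique and equals
the soft thresholding `s` of `w` at level `γt`: `(w - s) / (γt)` is a subgradient of `|·|` at `s`,
whence `(y - w)² + 2γt |y| ≥ (s - w)² + 2γt |s| + (y - s)²`.
-/

open Matrix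

/-- Frobenius inner product `⟨A, B⟩_F = trace(Aᵀ B)`. -/
def frobInner {m n : ℕ} (A B : Matrix (Fin m) (Fin n) ℝ) : ℝ :=
  Matrix.trace (Aᵀ * B)

/-- Frobenius norm `‖A‖_F = sqrt(⟨A, A⟩_F)`. -/
noncomputable def frobNorm {m n : ℕ} (A : Matrix (Fin m) (Fin n) ℝ) : ℝ :=
  Real.sqrt (frobInner A A)

lemma frobInner_eq_sum {m n : ℕ} (A B : Matrix (Fin m) (Fin n) ℝ) :
    frobInner A B = ∑ i, ∑ j, A i j * B i j := by
  simp only [frobInner, Matrix.trace, Matrix.diag_apply, Matrix.mul_apply, Matrix.transpose_apply]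
  exact Finset.sum_comm

lemma frobNorm_sq_eq_sum {m n : ℕ} (A : Matrix (Fin m) (Fin n) ℝ) :
    frobNorm A ^ 2 = ∑ i, ∑ j, A i j ^ 2 := by
  have hnonneg : 0 ≤ frobInner A A := by
    rw [frobInner_eq_sum]
    exact Finset.sum_nonneg fun i _ => Finset.sum_nonneg fun j _ => mul_self_nonneg _
  rw [frobNorm, Real.sq_sqrt hnonneg, frobInner_eq_sum]
  simp only [sq]

lemma isMinOn_apply_of_isMinOn_sum {ι α M : Type*} [Fintype ι] [DecidableEq ι]
    [AddCommMonoid M] [PartialOrder M] [IsOrderedCancelAddMonoid M] {φ : ι → α → M}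
    {x : ι → α} (h : IsMinOn (fun y : ι → α => ∑ i, φ i (y i)) Set.univ x) (i : ι) :
    IsMinOn (φ i) Set.univ (x i) := by
  rw [isMinOn_univ_iff] at h ⊢
  intro a
  have hupdate := h (Function.update x i a)
  simp only [Function.apply_update (fun j => φ j)] at hupdate
  rw [Finset.sum_update_of_mem (Finset.mem_univ i), Finset.sdiff_singleton_eq_erase,
    ← Finset.add_sum_erase _ _ (Finset.mem_univ i)] at hupdate
  exact le_of_add_le_add_right hupdate

lemma isMinOn_apply_apply_of_isMinOn_sum_sum {ι κ α M : Type*} [Fintype ι] [DecidableEq ι]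
    [Fintype κ] [DecidableEq κ] [AddCommMonoid M] [PartialOrder M] [IsOrderedCancelAddMonoid M]
    {φ : ι → κ → α → M} {x : ι → κ → α}
    (h : IsMinOn (fun y : ι → κ → α => ∑ i, ∑ j, φ i j (y i j)) Set.univ x) (i : ι) (j : κ) :
    IsMinOn (φ i j) Set.univ (x i j) :=
  isMinOn_apply_of_isMinOn_sum
    (isMinOn_apply_of_isMinOn_sum (φ := fun i (r : κ → α) => ∑ j, φ i j (r j)) h i) j

noncomputable def softThreshold (κ w : ℝ) : ℝ :=
  Real.sign w * max (|w| - κ) 0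

lemma softThreshold_subgradient {κ : ℝ} (hκ : 0 ≤ κ) (w y : ℝ) :
    0 ≤ (y - softThreshold κ w) * (softThreshold κ w - w) + κ * (|y| - |softThreshold κ w|) := by
  rcases le_or_gt |w| κ with hw | hw
  · have hs : softThreshold κ w = 0 := by simp [softThreshold, hw]
    have hwy : w * y ≤ κ * |y| := calc
      w * y ≤ |w| * |y| := by rw [← abs_mul]; exact le_abs_self _
      _ ≤ κ * |y| := by gcongr
    rw [hs, abs_zero]
    linarith
  · rcases (abs_pos.mp (hκ.trans_lt hw)).lt_or_gt with hneg | hpos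
    · rw [abs_of_neg hneg] at hw
      have hs : softThreshold κ w = w + κ := by
        rw [softThreshold, Real.sign_of_neg hneg, abs_of_neg hneg, max_eq_left (by linarith)]; ring
      rw [hs, abs_of_neg (a := w + κ) (by linarith)]
      nlinarith [neg_abs_le y]
    · rw [abs_of_pos hpos] at hw
      have hs : softThreshold κ w = w - κ := by
        rw [softThreshold, Real.sign_of_pos hpos, abs_of_pos hpos, max_eq_left (by linarith)]; ring
      rw [hs, abs_of_pos (a := w - κ) (by linarith)]
      nlinarith [le_abs_self y]

lemma eq_softThreshold_of_isMinOn {κ w z : ℝ} (hκ : 0 ≤ κ)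
    (h : IsMinOn (fun y => (y - w) ^ 2 + 2 * κ * |y|) Set.univ z) : z = softThreshold κ w := by
  have hz := isMinOn_univ_iff.mp h (softThreshold κ w)
  have hsub := softThreshold_subgradient hκ w z
  nlinarith [sq_nonneg (z - softThreshold κ w)]

lemma frobInner_add_frobNorm_sq_add_sum_abs_eq_sum {m n : ℕ} (Ω : Finset (Fin m × Fin n))
    (S g T : Matrix (Fin m) (Fin n) ℝ) (c γ : ℝ) :
    frobInner g T + c * frobNorm T ^ 2 + γ * ∑ p ∈ Ω, |S p.1 p.2 + T p.1 p.2| =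
      ∑ i, ∑ j, (g i j * T i j + c * T i j ^ 2 +
        if (i, j) ∈ Ω then γ * |S i j + T i j| else 0) := by
  rw [frobInner_eq_sum, frobNorm_sq_eq_sum, Finset.mul_sum, ← Fintype.sum_ite_mem Ω,
    Fintype.sum_prod_type]
  simp only [Finset.mul_sum, Finset.sum_add_distrib, mul_ite, mul_zero]

/-- Closed-form solution (21) of the ΔS subproblem: if `g` vanishes off `Ω`
and `d` minimizes `T ↦ ⟨g, T⟩_F + (1/(2t))‖T‖_F² + γ ∑_{(i,j)∈Ω} |S i j + T i j|`,
then `d` vanishes off `Ω`, and on `Ω` the entries of `S + d` are given by soft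
thresholding of the gradient step `S − t g` at level `γ t`. -/
theorem stmt_16 {m n : ℕ} (Ω : Finset (Fin m × Fin n))
    (S g : Matrix (Fin m) (Fin n) ℝ)
    (hg : ∀ i j, (i, j) ∉ Ω → g i j = 0)
    (t γ : ℝ) (ht : 0 < t) (hγ : 0 < γ)
    (d : Matrix (Fin m) (Fin n) ℝ)
    (hmin : IsMinOn (fun T : Matrix (Fin m) (Fin n) ℝ =>
        frobInner g T + (1 / (2 * t)) * frobNorm T ^ 2 +
          γ * ∑ p ∈ Ω, |S p.1 p.2 + T p.1 p.2|)
      Set.univ d) :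
    (∀ i j, (i, j) ∉ Ω → d i j = 0) ∧
      ∀ i j, (i, j) ∈ Ω →
        (S + d) i j =
          Real.sign (S i j - t * g i j) *
            max (|S i j - t * g i j| - γ * t) 0 := by
  generalize hc : 1 / (2 * t) = c at hmin
  simp only [frobInner_add_frobNorm_sq_add_sum_abs_eq_sum] at hmin
  have hentry := isMinOn_apply_apply_of_isMinOn_sum_sum (φ := fun i j x =>
    g i j * x + c * x ^ 2 + if (i, j) ∈ Ω then γ * |S i j + x| else 0) hmin
  refine ⟨fun i j hij => ?_, fun i j hij => ?_⟩
  · have h0 := isMinOn_univ_iff.mp (hentry i j) 0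
    simp only [hg i j hij, if_neg hij, zero_mul, zero_add, add_zero] at h0
    have hcpos : 0 < c := by rw [← hc]; positivity
    simpa using le_of_mul_le_mul_left h0 hcpos
  · rw [Matrix.add_apply]
    refine eq_softThreshold_of_isMinOn (by positivity) (isMinOn_univ_iff.mpr fun y => ?_)
    have hy := isMinOn_univ_iff.mp (hentry i j) (y - S i j)
    simp only [if_pos hij, add_sub_cancel] at hy
    have h2tc : 2 * t * c = 1 := by rw [← hc]; field_simp
    linear_combination (2 * t) * hy + ((y - S i j) ^ 2 - d i j ^ 2) * h2tc
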